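/- Suppose a rank-k subspace in the span of φ(Y) contains a (1+ε, Δ)-approximation for φ(A), i.e., there is a rank-k X in the span of φ(Y) with ‖X − φ(A)‖² ≤ (1+ε)‖φ(A) − [φ(A)]_k‖² + Δ. Let Q be an orthonormal basis of the span of φ(Y), and let W be an orthonormal rank-k matrix satisfying ‖WW^⊤Q^⊤φ(A) − Q^⊤φ(A)‖² ≤ (1+ε)‖[Q^⊤φ(A)]_k − Q^⊤φ(A)‖². Then L = QW satisfies ‖LL^⊤φ(A) − φ(A)‖² ≤ (1+ε)²‖φ(A) − [φ(A)]_k‖² + (1+ε)Δ. -/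
import Mathlib


open scoped BigOperators RealInnerProductSpace Matrix

/-- A column family `M : Fin n → H` has rank at most `k`. -/
def HasRankLE {H : Type*} [NormedAddCommGroup H] [InnerProductSpace ℝ H]
    {n : ℕ} (M : Fin n → H) (k : ℕ) : Prop :=
  ∃ (B : Fin k → H) (C : Matrix (Fin k) (Fin n) ℝ), ∀ j, M j = ∑ i, C i j • B i

/-- Squared Frobenius norm of a real matrix. -/
def frobSq {a b : ℕ} (M : Matrix (Fin a) (Fin b) ℝ) : ℝ := ∑ i, ∑ j, (M i j) ^ 2

lemma orth_norm_sq {H : Type*} [NormedAddCommGroup H] [InnerProductSpace ℝ H] {m : ℕ}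
    (Q : Fin m → H) (hQ : ∀ i j, ⟪Q i, Q j⟫ = if i = j then (1:ℝ) else 0)
    (c : Fin m → ℝ) (v : H) (hv : ∀ i, ⟪Q i, v⟫ = 0) :
    ‖(∑ i, c i • Q i) - v‖ ^ 2 = (∑ i, c i ^ 2) + ‖v‖ ^ 2 := by
  rw [← real_inner_self_eq_norm_sq, ← real_inner_self_eq_norm_sq]
  rw [inner_sub_left, inner_sub_right, inner_sub_right]
  rw [sum_inner, inner_sum]
  simp only [real_inner_smul_left, real_inner_smul_right, inner_sum, sum_inner, hQ, hv,
    mul_ite, mul_one, mul_zero, Finset.sum_ite_eq, Finset.mem_univ, if_true]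
  have h2 : ∀ i, ⟪v, Q i⟫ = 0 := fun i => by rw [real_inner_comm]; exact hv i
  simp [h2, hv]
  ring_nf

lemma span_repr {H : Type*} [NormedAddCommGroup H] [InnerProductSpace ℝ H] {m : ℕ}
    (Q : Fin m → H) (hQ : ∀ i j, ⟪Q i, Q j⟫ = if i = j then (1:ℝ) else 0)
    (v : H) (hv : v ∈ Submodule.span ℝ (Set.range Q)) :
    v = ∑ i, ⟪Q i, v⟫ • Q i := by
  induction hv using Submodule.span_induction with
  | mem x hx =>
    obtain ⟨j, rfl⟩ := hx
    simp [hQ]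
  | zero => simp
  | add x y hx hy ihx ihy =>
    simp only [inner_add_right, add_smul, Finset.sum_add_distrib]
    rw [← ihx, ← ihy]
  | smul a x hx ih =>
    simp only [real_inner_smul_right, mul_smul, ← Finset.smul_sum]
    rw [← ih]

lemma frobSq_comm {a b : ℕ} (M N : Matrix (Fin a) (Fin b) ℝ) :
    frobSq (M - N) = frobSq (N - M) := by
  unfold frobSq
  refine Finset.sum_congr rfl fun i _ => Finset.sum_congr rfl fun j _ => ?_
  simp only [Matrix.sub_apply]; ring

/-- If the span of `φ(Y)` contains a rank-k `(1+ε, Δ)`-approximation `X` for `φ(A)`,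
`Q` is an orthonormal basis of that span, and `W` is an orthonormal rank-k matrix with
`‖WWᵀQᵀφ(A) − Qᵀφ(A)‖² ≤ (1+ε)‖[Qᵀφ(A)]_k − Qᵀφ(A)‖²`, then `L = QW` satisfies
`‖LLᵀφ(A) − φ(A)‖² ≤ (1+ε)²‖φ(A) − [φ(A)]_k‖² + (1+ε)Δ`. -/
theorem disLR_approximation
    {H : Type*} [NormedAddCommGroup H] [InnerProductSpace ℝ H]
    {n m p k : ℕ} (ε Δ : ℝ) (hε : 0 ≤ ε) (hΔ : 0 ≤ Δ)
    (φA : Fin n → H) (φY : Fin p → H) (Q : Fin m → H)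
    (hQ : ∀ i j, ⟪Q i, Q j⟫ = if i = j then (1 : ℝ) else 0)
    (hspan : Submodule.span ℝ (Set.range Q) = Submodule.span ℝ (Set.range φY))
    -- φk is a best rank-k approximation of φ(A):
    (φk : Fin n → H) (hφk_rank : HasRankLE φk k)
    (hφk_best : ∀ N : Fin n → H, HasRankLE N k →
      ∑ j, ‖φA j - φk j‖ ^ 2 ≤ ∑ j, ‖φA j - N j‖ ^ 2)
    -- X is a rank-k matrix in the span of φ(Y) approximating φ(A):
    (X : Fin n → H) (hXrank : HasRankLE X k)
    (hXspan : ∀ j, X j ∈ Submodule.span ℝ (Set.range φY))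
    (hXapprox : ∑ j, ‖X j - φA j‖ ^ 2 ≤ (1 + ε) * (∑ j, ‖φA j - φk j‖ ^ 2) + Δ)
    -- G = Qᵀφ(A) and B is a best rank-k approximation of G:
    (G : Matrix (Fin m) (Fin n) ℝ) (hG : ∀ i j, G i j = ⟪Q i, φA j⟫)
    (B : Matrix (Fin m) (Fin n) ℝ) (hBrank : B.rank ≤ k)
    (hBbest : ∀ C : Matrix (Fin m) (Fin n) ℝ, C.rank ≤ k → frobSq (G - B) ≤ frobSq (G - C))
    -- W is orthonormal and WWᵀG approximates G as well as the best rank-k approximation: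
    (W : Matrix (Fin m) (Fin k) ℝ) (hW : Wᵀ * W = 1)
    (hWapprox : frobSq (W * Wᵀ * G - G) ≤ (1 + ε) * frobSq (B - G))
    -- L = QW:
    (L : Fin k → H) (hL : ∀ l, L l = ∑ i, W i l • Q i) :
    ∑ j, ‖(∑ l, ⟪L l, φA j⟫ • L l) - φA j‖ ^ 2 ≤
      (1 + ε) ^ 2 * (∑ j, ‖φA j - φk j‖ ^ 2) + (1 + ε) * Δ := by
  -- residual of φA orthogonal to span Q
  set r : Fin n → H := fun j => φA j - ∑ i, G i j • Q i with hr_def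
  have hr : ∀ i j, ⟪Q i, r j⟫ = 0 := by
    intro i j
    simp only [hr_def, inner_sub_right, inner_sum, real_inner_smul_right, hQ,
      mul_ite, mul_one, mul_zero, Finset.sum_ite_eq, Finset.mem_univ, if_true]
    rw [hG]; ring
  set R : ℝ := ∑ j, ‖r j‖ ^ 2 with hR_def
  have hR : 0 ≤ R := Finset.sum_nonneg fun j _ => sq_nonneg _
  -- D = Qᵀ X
  set D : Matrix (Fin m) (Fin n) ℝ := Matrix.of (fun i j => ⟪Q i, X j⟫) with hD_def
  have hXQ : ∀ j, X j ∈ Submodule.span ℝ (Set.range Q) := fun j => hspan ▸ hXspan j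
  have hXrepr : ∀ j, X j = ∑ i, D i j • Q i := fun j => span_repr Q hQ (X j) (hXQ j)
  -- rank of D
  have hDrank : D.rank ≤ k := by
    obtain ⟨Bk, C, hC⟩ := hXrank
    set E : Matrix (Fin m) (Fin k) ℝ := Matrix.of (fun i l => ⟪Q i, Bk l⟫) with hE_def
    have hDE : D = E * C := by
      ext i j
      simp only [hD_def, Matrix.of_apply, Matrix.mul_apply, hC, inner_sum,
        real_inner_smul_right, hE_def]
      exact Finset.sum_congr rfl fun l _ => mul_comm _ _
    rw [hDE]
    exact le_trans (Matrix.rank_mul_le_left E C)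
      (le_trans (Matrix.rank_le_card_width E) (by simp))
  -- the projection LLᵀφA
  have hLA : ∀ j, (∑ l, ⟪L l, φA j⟫ • L l) = ∑ i, (W * Wᵀ * G) i j • Q i := by
    intro j
    have hinner : ∀ l, ⟪L l, φA j⟫ = (Wᵀ * G) l j := by
      intro l
      rw [hL, sum_inner]
      simp only [real_inner_smul_left, Matrix.mul_apply, Matrix.transpose_apply, hG]
    calc ∑ l, ⟪L l, φA j⟫ • L l
        = ∑ l, (Wᵀ * G) l j • L l := by simp only [hinner]
      _ = ∑ l, ∑ i, ((Wᵀ * G) l j * W i l) • Q i := by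
          simp only [hL, Finset.smul_sum, smul_smul]
      _ = ∑ i, (∑ l, W i l * (Wᵀ * G) l j) • Q i := by
          rw [Finset.sum_comm]
          simp only [Finset.sum_smul]
          exact Finset.sum_congr rfl fun i _ => Finset.sum_congr rfl fun l _ => by
            rw [mul_comm]
      _ = ∑ i, (W * Wᵀ * G) i j • Q i := by
          refine Finset.sum_congr rfl fun i _ => ?_
          rw [Matrix.mul_assoc, Matrix.mul_apply]
  -- per-column norms
  have hmain : ∑ j, ‖(∑ l, ⟪L l, φA j⟫ • L l) - φA j‖ ^ 2
      = frobSq (W * Wᵀ * G - G) + R := by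
    have hcol : ∀ j, ‖(∑ l, ⟪L l, φA j⟫ • L l) - φA j‖ ^ 2
        = (∑ i, ((W * Wᵀ * G - G) i j) ^ 2) + ‖r j‖ ^ 2 := by
      intro j
      have heq : (∑ l, ⟪L l, φA j⟫ • L l) - φA j
          = (∑ i, ((W * Wᵀ * G - G) i j) • Q i) - r j := by
        rw [hLA]
        simp only [hr_def, Matrix.sub_apply, sub_smul, Finset.sum_sub_distrib]
        abel
      rw [heq]
      exact orth_norm_sq Q hQ _ _ (fun i => hr i j)
    simp only [hcol, Finset.sum_add_distrib, hR_def]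
    congr 1
    rw [frobSq, Finset.sum_comm]
  have hXcol : ∑ j, ‖X j - φA j‖ ^ 2 = frobSq (D - G) + R := by
    have hcol : ∀ j, ‖X j - φA j‖ ^ 2 = (∑ i, ((D - G) i j) ^ 2) + ‖r j‖ ^ 2 := by
      intro j
      have heq : X j - φA j = (∑ i, ((D - G) i j) • Q i) - r j := by
        rw [hXrepr j]
        simp only [hr_def, Matrix.sub_apply, sub_smul, Finset.sum_sub_distrib]
        abel
      rw [heq]
      exact orth_norm_sq Q hQ _ _ (fun i => hr i j)
    simp only [hcol, Finset.sum_add_distrib, hR_def]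
    congr 1
    rw [frobSq, Finset.sum_comm]
  -- chain of inequalities
  have h1 : frobSq (B - G) ≤ frobSq (D - G) := by
    rw [frobSq_comm B G, frobSq_comm D G]
    exact hBbest D hDrank
  have h1ε : (0:ℝ) ≤ 1 + ε := by linarith
  have h2 : frobSq (W * Wᵀ * G - G) ≤ (1 + ε) * frobSq (D - G) :=
    le_trans hWapprox (mul_le_mul_of_nonneg_left h1 h1ε)
  have hSk : 0 ≤ ∑ j, ‖φA j - φk j‖ ^ 2 := Finset.sum_nonneg fun j _ => sq_nonneg _
  have h3 : frobSq (D - G) = (∑ j, ‖X j - φA j‖ ^ 2) - R := by linarith [hXcol]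
  rw [hmain]
  nlinarith [mul_le_mul_of_nonneg_left hXapprox h1ε, mul_nonneg hε hR]
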